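/- arXiv:1205.1377 — 2 statements merged into one kernel-verified Lean document; each statement's English description precedes it below -/
import Mathlib

section
/- Let u₀(θ) = β + cos θ for some β ∈ ℝ, and define u_k for k ≥ 1 by the recursion ((k+n+1)k + n(n−2)/4)u_k + k(k+n−2)u_{k−2} + (n−2)(cosθ/sinθ)u_{k−2}' + u_{k−2}'' = (n(n−2)/4)P_k(u₀,…,u_{k−1}), where P_k = ∑_{p≥2,(p−1)n≤k} C((n+2)/(n−2),p) ∑_{l₁+⋯+l_p=k−(p−1)n} u_{l₁}⋯u_{l_p}, with u_{−1}=0. Then for every k ≥ 1, u_k is a polynomial in cos θ of degree at most k−1. -/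
open Polynomial Finset

noncomputable section

/-- Generalized binomial coefficient `C(x, p)` of a real number `x`. -/
def genBinom (x : ℝ) (p : ℕ) : ℝ :=
  (∏ i ∈ Finset.range p, (x - (i : ℝ))) / (Nat.factorial p : ℝ)

/-- The operator on polynomials in `cos θ` corresponding to `v ↦ (cosθ/sinθ)v′`:
`cotD P = -X·P′`. -/
def cotD (P : Polynomial ℝ) : Polynomial ℝ := -(Polynomial.X * P.derivative)

/-- The operator on polynomials in `cos θ` corresponding to `v ↦ v″`:
`secD P = -X·P′ + (1-X²)·P″`. -/
def secD (P : Polynomial ℝ) : Polynomial ℝ :=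
  -(Polynomial.X * P.derivative) + (1 - Polynomial.X ^ 2) * P.derivative.derivative

/-- `u_{k-2}` with the convention `u_{-1} = 0`. -/
def prevP (U : ℕ → Polynomial ℝ) (k : ℕ) : Polynomial ℝ :=
  if 2 ≤ k then U (k - 2) else 0

/-- The nonlinear source term
`P_k = ∑_{p≥2, (p-1)n≤k} C((n+2)/(n-2), p) ∑_{l₁+⋯+l_p = k-(p-1)n} u_{l₁}⋯u_{l_p}`. -/
def srcP (n k : ℕ) (U : ℕ → Polynomial ℝ) : Polynomial ℝ :=
  ∑ p ∈ Finset.Icc 2 (k / n + 1),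
    Polynomial.C (genBinom (((n : ℝ) + 2) / ((n : ℝ) - 2)) p) *
      ∑ t ∈ Finset.Nat.antidiagonalTuple p (k - (p - 1) * n), ∏ i, U (t i)

/-!
Strong induction on `k`, carrying the weaker bound `deg u_l ≤ l + 1` for all `l < k` (true for
`u₀ = β + X`). The operators `cotD` and `secD` do not raise the degree, `u_{k-2}` has degree at most
`k - 1`, and a product of `p ≥ 2` factors `u_{l_i}` with `∑ l_i = k - (p-1)n` has degree at most
`k - (p-1)n + p ≤ k - 1`. Since the coefficient of `u_k` in the recursion is positive, `u_k` is
a combination of these terms.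
-/

lemma natDegree_mul_iterate_derivative_le {R : Type*} [CommSemiring R] {Q : R[X]} {j : ℕ}
    (hQ : Q.natDegree ≤ j) (P : R[X]) : (Q * derivative^[j] P).natDegree ≤ P.natDegree := by
  by_cases hj : j ≤ P.natDegree
  · have := natDegree_iterate_derivative P j
    exact (natDegree_mul_le_of_le hQ this).trans (by omega)
  · rw [iterate_derivative_eq_zero (by omega), mul_zero, natDegree_zero]
    exact Nat.zero_le _

lemma natDegree_cotD_le (P : ℝ[X]) : (cotD P).natDegree ≤ P.natDegree := by
  rw [cotD, natDegree_neg]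
  exact natDegree_mul_iterate_derivative_le (j := 1) natDegree_X_le P

lemma natDegree_secD_le (P : ℝ[X]) : (secD P).natDegree ≤ P.natDegree := by
  have hQ : (1 - X ^ 2 : ℝ[X]).natDegree ≤ 2 :=
    (natDegree_sub_le _ _).trans (max_le (by simp) (natDegree_X_pow_le 2))
  rw [secD, ← cotD]
  exact natDegree_add_le_of_degree_le (natDegree_cotD_le P)
    (natDegree_mul_iterate_derivative_le (j := 2) hQ P)

lemma natDegree_le_of_recursion {c a b d : ℝ} (hc : c ≠ 0) {u v s : ℝ[X]} {m : ℕ}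
    (h : C c * u + C a * v + C b * cotD v + secD v = C d * s)
    (hv : v.natDegree ≤ m) (hs : s.natDegree ≤ m) : u.natDegree ≤ m := by
  have hu : C c * u = C d * s - (C a * v + C b * cotD v + secD v) := by
    linear_combination h
  rw [← natDegree_C_mul hc, hu]
  refine (natDegree_sub_le _ _).trans (max_le ((natDegree_C_mul_le d s).trans hs) ?_)
  refine natDegree_add_le_of_degree_le (natDegree_add_le_of_degree_le ?_ ?_) ?_
  · exact (natDegree_C_mul_le a v).trans hv
  · exact (natDegree_C_mul_le b _).trans ((natDegree_cotD_le v).trans hv)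
  · exact (natDegree_secD_le v).trans hv

section DegreeBounds

variable {U : ℕ → ℝ[X]} {k : ℕ}

lemma natDegree_prevP_le (H : ∀ l < k, (U l).natDegree ≤ l + 1) :
    (prevP U k).natDegree ≤ k - 1 := by
  unfold prevP
  split_ifs with hk
  · have := H (k - 2) (by omega)
    omega
  · simp

lemma natDegree_prod_le_of_mem_antidiagonalTuple {p m : ℕ} {t : Fin p → ℕ}
    (ht : t ∈ Nat.antidiagonalTuple p m) (H : ∀ l ≤ m, (U l).natDegree ≤ l + 1) :
    (∏ i, U (t i)).natDegree ≤ m + p := by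
  rw [Nat.mem_antidiagonalTuple] at ht
  calc (∏ i, U (t i)).natDegree ≤ ∑ i, (U (t i)).natDegree := natDegree_prod_le _ _
    _ ≤ ∑ i, (t i + 1) := by
        refine sum_le_sum fun i _ => H _ ?_
        rw [← ht]
        exact single_le_sum (fun j _ => Nat.zero_le (t j)) (mem_univ i)
    _ = m + p := by simp [sum_add_distrib, ht]

/-- The bound `k - (p-1)n + p ≤ k - 1` already needs `n ≥ 3` for `p = 2`. -/
lemma natDegree_srcP_le {n : ℕ} (hn : 3 ≤ n) (H : ∀ l < k, (U l).natDegree ≤ l + 1) :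
    (srcP n k U).natDegree ≤ k - 1 := by
  refine natDegree_sum_le_of_forall_le _ _ fun p hp => ?_
  rw [mem_Icc] at hp
  have hpn : (p - 1) * n ≤ k := (Nat.le_div_iff_mul_le (by omega)).mp (by omega)
  have hn_le : 3 * (p - 1) ≤ (p - 1) * n := by rw [mul_comm]; exact Nat.mul_le_mul_left _ hn
  refine (natDegree_C_mul_le _ _).trans (natDegree_sum_le_of_forall_le _ _ fun t ht => ?_)
  refine (natDegree_prod_le_of_mem_antidiagonalTuple ht fun l hl => H l (by omega)).trans ?_
  omega

end DegreeBounds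

/-- If `u₀(θ) = β + cos θ` and the `u_k` are defined by the Yamabe recursion
`((k+n+1)k + n(n-2)/4)u_k + k(k+n-2)u_{k-2} + (n-2)(cosθ/sinθ)u_{k-2}′ + u_{k-2}″
  = (n(n-2)/4) P_k(u₀,…,u_{k-1})` (with `u_{-1} = 0`), then for every `k ≥ 1`,
`u_k` is a polynomial in `cos θ` of degree at most `k-1`. -/
theorem uk_polynomial_degree (n : ℕ) (hn : 3 ≤ n) (β : ℝ)
    (U : ℕ → Polynomial ℝ)
    (h0 : U 0 = Polynomial.C β + Polynomial.X)
    (hrec : ∀ k : ℕ, 1 ≤ k →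
      Polynomial.C ((((k : ℝ) + n + 1) * k) + (n : ℝ) * ((n : ℝ) - 2) / 4) * U k
        + Polynomial.C ((k * (k + n - 2) : ℕ) : ℝ) * prevP U k
        + Polynomial.C ((n : ℝ) - 2) * cotD (prevP U k)
        + secD (prevP U k)
      = Polynomial.C ((n : ℝ) * ((n : ℝ) - 2) / 4) * srcP n k U) :
    ∀ k : ℕ, 1 ≤ k → (U k).natDegree ≤ k - 1 := by
  intro k
  induction k using Nat.strong_induction_on with
  | _ k IH =>
    intro hk
    have H : ∀ l < k, (U l).natDegree ≤ l + 1 := by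
      intro l hl
      rcases Nat.eq_zero_or_pos l with rfl | hl0
      · rw [h0, add_comm, natDegree_X_add_C]
      · have := IH l hl hl0
        omega
    have hc : (((k : ℝ) + n + 1) * k) + (n : ℝ) * ((n : ℝ) - 2) / 4 ≠ 0 := by
      have hk' : (1 : ℝ) ≤ k := by exact_mod_cast hk
      have hn' : (3 : ℝ) ≤ n := by exact_mod_cast hn
      nlinarith
    exact natDegree_le_of_recursion hc (hrec k hk) (natDegree_prevP_le H)
      (natDegree_srcP_le hn H)
end
end

section
/- Let 0 ≤ a_l ≤ α^l/(l+1)² for all l ≥ 0 and p ≥ 2. Then the p-fold convolution S_p(l) := ∑_{l₁+⋯+l_p=l} a_{l₁}⋯a_{l_p} satisfies S_p(l) ≤ α^l π^{2(p−1)}/(l+p)². -/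
/-!
Since `S_{p+1}(n) = ∑_{i+j=n} a_i S_p(j)`, induction on `p` reduces the bound to the two-fold
estimate `∑_{i+j=n} 1/((i+1)²(j+k)²) ≤ π²/(n+k+1)²` for `k ≥ 1`. With `A = i+1`, `B = j+k` one has
`A + B = n+k+1` and `1/(AB) = (1/A + 1/B)/(A+B)`, so `(x+y)² ≤ 2(x²+y²)` bounds each term by
`2(1/A² + 1/B²)/(n+k+1)²`, and the two resulting sums are partial sums of `∑ 1/m² = π²/6`.
-/
open Real Finset

theorem Finset.Nat.sum_antidiagonalTuple_succ {M : Type*} [AddCommMonoid M] (k n : ℕ)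
    (f : (Fin (k + 1) → ℕ) → M) :
    ∑ t ∈ antidiagonalTuple (k + 1) n, f t
      = ∑ x ∈ antidiagonal n, ∑ t ∈ antidiagonalTuple k x.2, f (Fin.cons x.1 t) := by
  simp only [Finset.sum, Finset.Nat.antidiagonalTuple, Multiset.Nat.antidiagonalTuple,
    List.Nat.antidiagonalTuple, HasAntidiagonal.antidiagonal, Multiset.Nat.antidiagonal,
    Multiset.map_coe, Multiset.sum_coe, List.flatMap, List.map_flatten, List.sum_flatten,
    List.map_map, Function.comp_def]

/-- `convolutionPower a p n` is the coefficient of `X ^ n` in `(∑ a i X ^ i) ^ p`. -/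
def convolutionPower {R : Type*} [CommSemiring R] (a : ℕ → R) (p n : ℕ) : R :=
  ∑ t ∈ Finset.Nat.antidiagonalTuple p n, ∏ i, a (t i)

section convolutionPower

variable {R : Type*} [CommSemiring R] (a : ℕ → R)

theorem convolutionPower_one (n : ℕ) : convolutionPower a 1 n = a n := by
  simp [convolutionPower]

theorem convolutionPower_succ (p n : ℕ) :
    convolutionPower a (p + 1) n
      = ∑ x ∈ antidiagonal n, a x.1 * convolutionPower a p x.2 := by
  simp only [convolutionPower, Finset.Nat.sum_antidiagonalTuple_succ, mul_sum,
    Fin.prod_univ_succ, Fin.cons_zero, Fin.cons_succ]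

theorem convolutionPower_nonneg [PartialOrder R] [IsOrderedRing R] {a : ℕ → R}
    (ha : ∀ n, 0 ≤ a n) (p n : ℕ) : 0 ≤ convolutionPower a p n :=
  sum_nonneg fun _ _ => prod_nonneg fun _ _ => ha _

end convolutionPower

theorem sum_one_div_sq_le_of_injOn {ι : Type*} (s : Finset ι) {g : ι → ℕ}
    (hg : Set.InjOn g s) : ∑ i ∈ s, 1 / (g i : ℝ) ^ 2 ≤ π ^ 2 / 6 := by
  rw [← sum_image (f := fun n : ℕ => 1 / (n : ℝ) ^ 2) hg]
  exact sum_le_hasSum _ (fun _ _ => by positivity) hasSum_zeta_two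

theorem one_div_sq_mul_sq_le {A B : ℝ} (hA : 0 < A) (hB : 0 < B) :
    1 / (A ^ 2 * B ^ 2) ≤ 2 / (A + B) ^ 2 * (1 / A ^ 2 + 1 / B ^ 2) := by
  rw [div_mul_eq_mul_div, div_le_div_iff₀ (by positivity) (by positivity)]
  field_simp
  nlinarith [sq_nonneg (A - B), mul_pos hA hB]

theorem sum_antidiagonal_one_div_sq_mul_sq_le (n k : ℕ) (hk : 1 ≤ k) :
    ∑ x ∈ antidiagonal n, 1 / (((x.1 : ℝ) + 1) ^ 2 * ((x.2 : ℝ) + k) ^ 2)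
      ≤ π ^ 2 / ((n : ℝ) + k + 1) ^ 2 := by
  have hk' : (0 : ℝ) < k := by exact_mod_cast hk
  have hfst : ∑ x ∈ antidiagonal n, 1 / ((x.1 : ℝ) + 1) ^ 2 ≤ π ^ 2 / 6 := by
    simpa using sum_one_div_sq_le_of_injOn (antidiagonal n) (g := fun x => x.1 + 1)
      fun x hx y hy h => (HasAntidiagonal.antidiagonal_congr hx hy).2 (by simpa using h)
  have hsnd : ∑ x ∈ antidiagonal n, 1 / ((x.2 : ℝ) + k) ^ 2 ≤ π ^ 2 / 6 := by
    simpa using sum_one_div_sq_le_of_injOn (antidiagonal n) (g := fun x => x.2 + k)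
      fun x hx y hy h => (HasAntidiagonal.antidiagonal_congr' hx hy).2 (by simpa using h)
  calc ∑ x ∈ antidiagonal n, 1 / (((x.1 : ℝ) + 1) ^ 2 * ((x.2 : ℝ) + k) ^ 2)
      ≤ ∑ x ∈ antidiagonal n,
          2 / ((n : ℝ) + k + 1) ^ 2 * (1 / ((x.1 : ℝ) + 1) ^ 2 + 1 / ((x.2 : ℝ) + k) ^ 2) := by
        refine sum_le_sum fun x hx => ?_
        have hn : (x.1 : ℝ) + 1 + (x.2 + k) = n + k + 1 := by
          rw [← mem_antidiagonal.1 hx]; push_cast; ring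
        simpa only [hn] using one_div_sq_mul_sq_le (A := (x.1 : ℝ) + 1) (B := (x.2 : ℝ) + k)
          (by positivity) (by positivity)
    _ ≤ 2 / ((n : ℝ) + k + 1) ^ 2 * (π ^ 2 / 6 + π ^ 2 / 6) := by
        rw [← mul_sum, sum_add_distrib]
        gcongr
    _ ≤ π ^ 2 / ((n : ℝ) + k + 1) ^ 2 := by
        rw [div_mul_eq_mul_div]
        gcongr
        nlinarith [sq_nonneg π]

theorem convolutionPower_le {α : ℝ} {a : ℕ → ℝ} (ha0 : ∀ n, 0 ≤ a n)
    (ha1 : ∀ n, a n ≤ α ^ n / ((n : ℝ) + 1) ^ 2) {p : ℕ} (hp : 1 ≤ p) (n : ℕ) :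
    convolutionPower a p n ≤ α ^ n * π ^ (2 * (p - 1)) / ((n : ℝ) + p) ^ 2 := by
  have hα : ∀ n, 0 ≤ α ^ n := fun n => by
    simpa using (le_div_iff₀ (by positivity)).1 ((ha0 n).trans (ha1 n))
  induction p, hp using Nat.le_induction generalizing n with
  | base => simpa [convolutionPower_one] using ha1 n
  | succ p hp ih =>
    calc convolutionPower a (p + 1) n
        = ∑ x ∈ antidiagonal n, a x.1 * convolutionPower a p x.2 := convolutionPower_succ a p n
      _ ≤ ∑ x ∈ antidiagonal n, α ^ x.1 / ((x.1 : ℝ) + 1) ^ 2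
            * (α ^ x.2 * π ^ (2 * (p - 1)) / ((x.2 : ℝ) + p) ^ 2) :=
          sum_le_sum fun x _ => mul_le_mul (ha1 x.1) (ih x.2)
            (convolutionPower_nonneg ha0 p x.2) ((ha0 x.1).trans (ha1 x.1))
      _ = α ^ n * π ^ (2 * (p - 1))
            * ∑ x ∈ antidiagonal n, 1 / (((x.1 : ℝ) + 1) ^ 2 * ((x.2 : ℝ) + p) ^ 2) := by
          rw [mul_sum]
          refine sum_congr rfl fun x hx => ?_
          rw [← mem_antidiagonal.1 hx, pow_add]
          field_simp
      _ ≤ α ^ n * π ^ (2 * (p - 1)) * (π ^ 2 / ((n : ℝ) + p + 1) ^ 2) := by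
          gcongr
          · exact mul_nonneg (hα n) (by positivity)
          · exact sum_antidiagonal_one_div_sq_mul_sq_le n p hp
      _ = α ^ n * π ^ (2 * (p + 1 - 1)) / ((n : ℝ) + ↑(p + 1)) ^ 2 := by
          rw [show 2 * (p + 1 - 1) = 2 * (p - 1) + 2 by omega, pow_add]
          push_cast
          ring

/-- If `0 ≤ a_l ≤ α^l/(l+1)²` for all `l`, then the `p`-fold convolution
`S_p(l) = ∑_{l₁+⋯+l_p = l} a_{l₁}⋯a_{l_p}` satisfies
`S_p(l) ≤ α^l π^{2(p-1)}/(l+p)²`. -/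
theorem convolution_bound (α : ℝ) (a : ℕ → ℝ)
    (ha0 : ∀ l, 0 ≤ a l) (ha1 : ∀ l, a l ≤ α ^ l / ((l : ℝ) + 1) ^ 2)
    (p : ℕ) (hp : 2 ≤ p) (l : ℕ) :
    (∑ t ∈ Finset.Nat.antidiagonalTuple p l, ∏ i, a (t i))
      ≤ α ^ l * π ^ (2 * (p - 1)) / ((l : ℝ) + p) ^ 2 :=
  convolutionPower_le ha0 ha1 (by omega) l
end
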